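/- Witness for Observation 2.1 (Figure 1). Consider the temporal graph G = (V,E,T,α,β) with V = {A,B,C,D,E₀}, T = 16, α(v) = 0 and β(v) = 4 for all v ∈ V, transmission time 0 on all arcs, and time-arc set E = {(A,B,4,0), (B,D,8,0), (D,E₀,10,0), (E₀,B,14,0), (B,C,16,0)}. Then the sequence ((A,B,4,0),(B,D,8,0),(D,E₀,10,0),(E₀,B,14,0),(B,C,16,0)) is a temporal walk from A to C, and every temporal walk from A to C visits the vertex B at least twice; in particular, no temporal walk from A to C is a temporal path. -/

import Mathlib

/-! From `A` the only arc is `(A,B,4)`, and at every later step the waiting window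
`[t, t + 4]` at the current vertex contains the time stamp of exactly one outgoing arc (none
after arriving at `C`). Hence every temporal walk from `A` is a prefix of
`A → B → D → E₀ → B → C`, and the only such prefix ending in `C` is the whole walk,
which passes through `B` twice. -/

namespace TW

/-- A time-arc `(v, w, t, λ)` of a temporal graph: a directed connection
from `src` to `dst` with time stamp `ts` and transmission time `tt`. -/
structure TArc (V : Type*) where
  src : V
  dst : V
  ts : ℕ
  tt : ℕ
deriving DecidableEq

/-- A time-arc `(v, w, t)` of an instantaneous temporal graph. -/
structure IArc (V : Type*) where
  src : V
  dst : V
  ts : ℕ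
deriving DecidableEq

variable {V : Type*}

/-- `ValidTG Vset T E af bf` expresses that `(Vset, E, T, af, bf)` is a temporal
graph: `E ⊆ V × V × {1,…,T} × {0,…,T}` and `af, bf : V → {0,…,T}`. -/
def ValidTG (Vset : Finset V) (T : ℕ) (E : Finset (TArc V))
    (af bf : V → ℕ) : Prop :=
  (∀ e ∈ E, e.src ∈ Vset ∧ e.dst ∈ Vset ∧ 1 ≤ e.ts ∧ e.ts ≤ T ∧ e.tt ≤ T) ∧
    ∀ v, af v ≤ T ∧ bf v ≤ T

/-- Validity for an instantaneous temporal graph `(Vset, E, T, bf)`. -/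
def ValidIG (Vset : Finset V) (T : ℕ) (E : Finset (IArc V))
    (bf : V → ℕ) : Prop :=
  (∀ e ∈ E, e.src ∈ Vset ∧ e.dst ∈ Vset ∧ 1 ≤ e.ts ∧ e.ts ≤ T) ∧
    ∀ v, bf v ≤ T

/-- A temporal walk from `s` to `z` in the temporal graph with time-arc set `E`,
minimum waiting times `af`, and maximum waiting times `bf`:
a nonempty sequence `((v_{i-1}, v_i, t_i, λ_i))_{i=1}^k` of time-arcs of `E`
with `v_0 = s`, `v_k = z`, and
`t_i + λ_i + af v_i ≤ t_{i+1} ≤ t_i + λ_i + bf v_i` for all `i ∈ {1,…,k-1}`. -/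
def IsTWalk (E : Finset (TArc V)) (af bf : V → ℕ) (s z : V)
    (P : List (TArc V)) : Prop :=
  P ≠ [] ∧ (∀ e ∈ P, e ∈ E) ∧
    P.head?.map TArc.src = some s ∧ P.getLast?.map TArc.dst = some z ∧
    List.Chain' (fun e f => e.dst = f.src ∧
      e.ts + e.tt + af e.dst ≤ f.ts ∧ f.ts ≤ e.ts + e.tt + bf e.dst) P

/-- A temporal walk from `s` to `z` in an instantaneous temporal graph. -/
def IsIWalk (E : Finset (IArc V)) (bf : V → ℕ) (s z : V)
    (P : List (IArc V)) : Prop :=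
  P ≠ [] ∧ (∀ e ∈ P, e ∈ E) ∧
    P.head?.map IArc.src = some s ∧ P.getLast?.map IArc.dst = some z ∧
    List.Chain' (fun e f => e.dst = f.src ∧
      e.ts ≤ f.ts ∧ f.ts ≤ e.ts + bf e.dst) P

/-- The vertex sequence `v_0, v_1, …, v_k` of a walk. -/
def tVerts (P : List (TArc V)) : List V :=
  (P.head?.map TArc.src).toList ++ P.map TArc.dst

/-- The vertex sequence `v_0, v_1, …, v_k` of a walk (instantaneous case). -/
def iVerts (P : List (IArc V)) : List V :=
  (P.head?.map IArc.src).toList ++ P.map IArc.dst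

/-- Departure time `t_1` of a walk. -/
def tFirst (P : List (TArc V)) : ℕ := (P.head?.map TArc.ts).getD 0

/-- Arrival time `t_k + λ_k` of a walk. -/
def tLastArr (P : List (TArc V)) : ℕ :=
  (P.getLast?.map (fun e => e.ts + e.tt)).getD 0

/-- First time stamp `t_1` of an instantaneous walk. -/
def iFirst (P : List (IArc V)) : ℕ := (P.head?.map IArc.ts).getD 0

/-- Last time stamp `t_m` of an instantaneous walk. -/
def iLast (P : List (IArc V)) : ℕ := (P.getLast?.map IArc.ts).getD 0

/-- Total waiting time `∑_{i=1}^{k-1} (t_{i+1} - (t_i + λ_i))` of a walk. -/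
def waitSum (P : List (TArc V)) : ℚ :=
  ((P.zip P.tail).map
    (fun ef => (ef.2.ts : ℚ) - ((ef.1.ts : ℚ) + (ef.1.tt : ℚ)))).sum

/-- `val(P)`: the linear combination
`δ1·(t_k+λ_k) + δ2·(−t_1) + δ3·(t_k+λ_k−t_1) + δ4·Σλ_i + δ5·Σc(e_i) + δ6·k
 + δ7·Σ(t_{i+1}−(t_i+λ_i))`. -/
def val (c : TArc V → ℕ) (d1 d2 d3 d4 d5 d6 d7 : ℚ) (P : List (TArc V)) : ℚ :=
  d1 * (tLastArr P : ℚ) + d2 * (-(tFirst P : ℚ))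
    + d3 * ((tLastArr P : ℚ) - (tFirst P : ℚ))
    + d4 * (P.map (fun e => (e.tt : ℚ))).sum
    + d5 * (P.map (fun e => (c e : ℚ))).sum
    + d6 * (P.length : ℚ) + d7 * waitSum P

/-- `∑_{i=1}^{m-1} ((t_{i+1} − (t_i − A(v_i)))·ind(v_i))` for an instantaneous
walk, where `v_i` is the intermediate vertex between `e_i` and `e_{i+1}`. -/
def iWaitSum (ind A : V → ℕ) (P : List (IArc V)) : ℚ :=
  ((P.zip P.tail).map
    (fun ef => ((ef.2.ts : ℚ) - ((ef.1.ts : ℚ) - (A ef.1.dst : ℚ)))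
      * (ind ef.1.dst : ℚ))).sum

/-- `val'(P)`: the adapted linear combination
`δ1·t_m + δ2·(−t_1) + δ3·(t_m−t_1) + δ4·Σc_λ(e_i) + δ5·Σc(e_i) + (δ6/2)·m
 + δ7·Σ((t_{i+1}−(t_i−A(v_i)))·ind(v_i))` for instantaneous walks. -/
def val' (c cl : IArc V → ℕ) (ind A : V → ℕ) (d1 d2 d3 d4 d5 d6 d7 : ℚ)
    (P : List (IArc V)) : ℚ :=
  d1 * (iLast P : ℚ) + d2 * (-(iFirst P : ℚ))
    + d3 * ((iLast P : ℚ) - (iFirst P : ℚ))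
    + d4 * (P.map (fun e => (cl e : ℚ))).sum
    + d5 * (P.map (fun e => (c e : ℚ))).sum
    + (d6 / 2) * (P.length : ℚ) + d7 * iWaitSum ind A P

section Transformation

variable [DecidableEq V]

/-- The arcs `E^O = {(v, v_e, t) : e = (v,u,t,λ) ∈ E}` of Transformation 1. -/
def trEO (E : Finset (TArc V)) : Finset (IArc (V ⊕ TArc V)) :=
  E.image (fun e => ⟨Sum.inl e.src, Sum.inr e, e.ts⟩)

/-- The arcs `E^I = {(v_e, u, t+λ+α(u)) : e = (v,u,t,λ) ∈ E}`. -/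
def trEI (af : V → ℕ) (E : Finset (TArc V)) : Finset (IArc (V ⊕ TArc V)) :=
  E.image (fun e => ⟨Sum.inr e, Sum.inl e.dst, e.ts + e.tt + af e.dst⟩)

/-- The arc set `E' = E^O ∪ E^I` of the transformed instantaneous graph. -/
def trE (af : V → ℕ) (E : Finset (TArc V)) : Finset (IArc (V ⊕ TArc V)) :=
  trEO E ∪ trEI af E

/-- `β'`: `β' v = β v` for `v ∈ V` and `β' v_e = T` for arc vertices. -/
def trBeta (bf : V → ℕ) (T : ℕ) : V ⊕ TArc V → ℕ :=
  Sum.elim bf (fun _ => T)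

/-- The transformed cost function `c'`. -/
def trC (c : TArc V → ℕ) : IArc (V ⊕ TArc V) → ℕ := fun e' =>
  match e'.src, e'.dst with
  | Sum.inl _, Sum.inr eh => c eh
  | _, _ => 0

/-- The transmission-cost function `c_λ`. -/
def trCl : IArc (V ⊕ TArc V) → ℕ := fun e' =>
  match e'.src, e'.dst with
  | Sum.inr eh, Sum.inl _ => eh.tt
  | _, _ => 0

/-- The vertex-index function `ind`: `1` on original vertices, `0` else. -/
def trInd : V ⊕ TArc V → ℕ := Sum.elim (fun _ => 1) (fun _ => 0)

/-- The auxiliary function `A`: `A v = α v` on original vertices, `0` else. -/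
def trA (af : V → ℕ) : V ⊕ TArc V → ℕ := Sum.elim af (fun _ => 0)

/-- The walk `P'` in `G'` corresponding to a walk `P` in `G`:
each arc `e = (v,u,t,λ)` is replaced by the two arcs
`(v, v_e, t)` and `(v_e, u, t+λ+α(u))`. -/
def corr (af : V → ℕ) (P : List (TArc V)) : List (IArc (V ⊕ TArc V)) :=
  P.flatMap (fun e =>
    [⟨Sum.inl e.src, Sum.inr e, e.ts⟩,
     ⟨Sum.inr e, Sum.inl e.dst, e.ts + e.tt + af e.dst⟩])

end Transformation

theorem isPrefix_of_isChain_of_forced {α : Type*} {R : α → α → Prop} {S : Set α}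
    {W l : List α} {a : α}
    (hforced : ∀ i (hi : i < W.length), ∀ b ∈ S, R W[i] b → W[i + 1]? = some b)
    (hhead : W.head? = some a) (hl : ∀ b ∈ l, b ∈ S) (hchain : (a :: l).IsChain R) :
    a :: l <+: W := by
  obtain ⟨W, rfl⟩ := List.head?_eq_some_iff.mp hhead
  clear hhead
  induction l generalizing a W with
  | nil => simp
  | cons b l ih =>
    rw [List.isChain_cons_cons] at hchain
    obtain ⟨W, rfl⟩ : ∃ W', W = b :: W' := List.head?_eq_some_iff.mp <| by
      simpa [List.head?_eq_getElem?] using hforced 0 (by simp) b (hl b (by simp)) hchain.1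
    exact (List.prefix_cons_inj a).mpr <| ih (fun c hc => hl c (by simp [hc])) hchain.2 W
      (fun i hi => hforced (i + 1) (by simpa using hi))

def CanFollow (af bf : V → ℕ) (e f : TArc V) : Prop :=
  e.dst = f.src ∧ e.ts + e.tt + af e.dst ≤ f.ts ∧ f.ts ≤ e.ts + e.tt + bf e.dst

instance [DecidableEq V] (af bf : V → ℕ) : DecidableRel (CanFollow af bf) :=
  fun _ _ => inferInstanceAs (Decidable (_ ∧ _))

theorem IsTWalk.isPrefix {E : Finset (TArc V)} {af bf : V → ℕ} {s z : V}
    {P W : List (TArc V)} (hP : IsTWalk E af bf s z P)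
    (hstart : ∀ e ∈ E, e.src = s → W.head? = some e)
    (hforced : ∀ i (hi : i < W.length), ∀ f ∈ E,
      CanFollow af bf W[i] f → W[i + 1]? = some f) :
    P <+: W := by
  obtain ⟨hne, hE, hhead, -, hchain⟩ := hP
  obtain ⟨a, l, rfl⟩ := List.exists_cons_of_ne_nil hne
  exact isPrefix_of_isChain_of_forced (S := E) hforced
    (hstart a (hE a (by simp)) (by simpa using hhead)) (fun b hb => hE b (by simp [hb])) hchain

-- The vertices `A, B, C, D, E₀` are `0, 1, 2, 3, 4`.
def figureOneArcs : Finset (TArc (Fin 5)) :=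
  {⟨0,1,4,0⟩, ⟨1,3,8,0⟩, ⟨3,4,10,0⟩, ⟨4,1,14,0⟩, ⟨1,2,16,0⟩}

def figureOneWalk : List (TArc (Fin 5)) :=
  [⟨0,1,4,0⟩, ⟨1,3,8,0⟩, ⟨3,4,10,0⟩, ⟨4,1,14,0⟩, ⟨1,2,16,0⟩]

theorem isTWalk_figureOneWalk :
    IsTWalk figureOneArcs (fun _ => 0) (fun _ => 4) 0 2 figureOneWalk :=
  ⟨by decide, by decide, rfl, rfl,
    (by decide : figureOneWalk.IsChain (CanFollow (fun _ => 0) (fun _ => 4)))⟩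

theorem eq_figureOneWalk_of_isTWalk {P : List (TArc (Fin 5))}
    (hP : IsTWalk figureOneArcs (fun _ => 0) (fun _ => 4) 0 2 P) : P = figureOneWalk := by
  have hprefix : P <+: figureOneWalk := hP.isPrefix (by decide) (by decide)
  have hlast : ∀ Q ∈ figureOneWalk.inits,
      Q.getLast?.map TArc.dst = some 2 → Q = figureOneWalk := by decide
  exact hlast P (List.mem_inits _ _ |>.mpr hprefix) hP.2.2.2.1

/-- **Witness for Observation 2.1 (Figure 1).** Vertices `A=0, B=1, C=2, D=3,
E₀=4`, lifetime `T = 16`, `α ≡ 0`, `β ≡ 4`, all transmission times `0`,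
arcs `{(A,B,4), (B,D,8), (D,E₀,10), (E₀,B,14), (B,C,16)}`. The indicated
sequence is a temporal walk from `A` to `C`, every temporal walk from `A` to
`C` visits `B` at least twice, and no temporal walk from `A` to `C` is a
temporal path. -/
theorem figure_one_witness :
    IsTWalk
        ({⟨0,1,4,0⟩, ⟨1,3,8,0⟩, ⟨3,4,10,0⟩, ⟨4,1,14,0⟩, ⟨1,2,16,0⟩} :
          Finset (TArc (Fin 5)))
        (fun _ => 0) (fun _ => 4) 0 2
        [⟨0,1,4,0⟩, ⟨1,3,8,0⟩, ⟨3,4,10,0⟩, ⟨4,1,14,0⟩, ⟨1,2,16,0⟩] ∧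
    (∀ P, IsTWalk
        ({⟨0,1,4,0⟩, ⟨1,3,8,0⟩, ⟨3,4,10,0⟩, ⟨4,1,14,0⟩, ⟨1,2,16,0⟩} :
          Finset (TArc (Fin 5)))
        (fun _ => 0) (fun _ => 4) 0 2 P →
      2 ≤ (tVerts P).count 1) ∧
    (∀ P, IsTWalk
        ({⟨0,1,4,0⟩, ⟨1,3,8,0⟩, ⟨3,4,10,0⟩, ⟨4,1,14,0⟩, ⟨1,2,16,0⟩} :
          Finset (TArc (Fin 5)))
        (fun _ => 0) (fun _ => 4) 0 2 P →
      ¬ (tVerts P).Nodup) := by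
  refine ⟨isTWalk_figureOneWalk, fun P hP => ?_, fun P hP => ?_⟩ <;>
    rw [eq_figureOneWalk_of_isTWalk hP] <;> decide

end TW
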